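/- For nonnegative integers a, b, c, d with d ≤ b + c: ∑_{k=max(0,d−c)}^{min(b,d)} q^{(b-k)(d-k)} · C_q(b, k) · C_q(c, d−k) · C_q(a+k, b+c) = C_q(a, b+c−d) · C_q(a−c+d, d). -/

import Mathlib

/-!
Expand `C_q(a + k, b + c)` over `j` by the q-Vandermonde identity and exchange the two sums.
The inner sum over `k`, and then the remaining sum over `j`, are each evaluated by the
q-trinomial revision `C_q(M, i) C_q(i, t) = C_q(M, t) C_q(M - t, i - t)` followed by
q-Vandermonde once more.
-/

open Finset

/-- The q-Pochhammer symbol `(a;q)_n = ∏_{j=0}^{n-1} (1 - a q^j)`. -/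
noncomputable def qPoch (q a : RatFunc ℚ) (n : ℕ) : RatFunc ℚ :=
  ∏ j ∈ Finset.range n, (1 - a * q ^ j)

/-- The Gaussian (q-binomial) coefficient `C_q(m, k)`, defined as
`(q;q)_m / ((q;q)_k (q;q)_{m-k})` for `0 ≤ k ≤ m`, and `0` otherwise. -/
noncomputable def qBinom (q : RatFunc ℚ) (m k : ℤ) : RatFunc ℚ :=
  if 0 ≤ k ∧ k ≤ m then
    qPoch q q m.toNat / (qPoch q q k.toNat * qPoch q q (m - k).toNat)
  else 0

variable {q : RatFunc ℚ}

lemma qPoch_zero (a : RatFunc ℚ) : qPoch q a 0 = 1 := prod_range_zero _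

lemma qPoch_self_succ (n : ℕ) : qPoch q q (n + 1) = qPoch q q n * (1 - q ^ (n + 1)) := by
  rw [qPoch, qPoch, prod_range_succ, pow_succ']

lemma one_sub_pow_succ_ne_zero (hq : ¬IsOfFinOrder q) (n : ℕ) : 1 - q ^ (n + 1) ≠ 0 :=
  fun h => hq <| isOfFinOrder_iff_pow_eq_one.mpr ⟨n + 1, n.succ_pos, (sub_eq_zero.mp h).symm⟩

lemma qPoch_self_ne_zero (hq : ¬IsOfFinOrder q) (n : ℕ) : qPoch q q n ≠ 0 :=
  prod_ne_zero_iff.mpr fun j _ => by rw [← pow_succ']; exact one_sub_pow_succ_ne_zero hq j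

lemma qBinom_eq_zero {m k : ℤ} (h : ¬(0 ≤ k ∧ k ≤ m)) : qBinom q m k = 0 := if_neg h

lemma qBinom_natCast {m k : ℕ} (h : k ≤ m) :
    qBinom q m k = qPoch q q m / (qPoch q q k * qPoch q q (m - k)) := by
  rw [qBinom, if_pos ⟨k.cast_nonneg, by exact_mod_cast h⟩, ← Nat.cast_sub h,
    Int.toNat_natCast, Int.toNat_natCast, Int.toNat_natCast]

lemma qBinom_symm (m k : ℤ) : qBinom q m (m - k) = qBinom q m k := by
  unfold qBinom
  rw [sub_sub_cancel]
  by_cases h : 0 ≤ k ∧ k ≤ m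
  · rw [if_pos (by omega), if_pos h, mul_comm]
  · rw [if_neg (by omega), if_neg h]

lemma qBinom_mul_qBinom (hq : ¬IsOfFinOrder q) (m k j : ℤ) :
    qBinom q m k * qBinom q k j = qBinom q m j * qBinom q (m - j) (k - j) := by
  by_cases h : 0 ≤ j ∧ j ≤ k ∧ k ≤ m
  · obtain ⟨hj, hjk, hkm⟩ := h
    lift j to ℕ using hj
    lift k to ℕ using by omega
    lift m to ℕ using by omega
    have hjk : j ≤ k := by exact_mod_cast hjk
    have hkm : k ≤ m := by exact_mod_cast hkm
    rw [← Nat.cast_sub (hjk.trans hkm), ← Nat.cast_sub hjk, qBinom_natCast hkm,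
      qBinom_natCast hjk, qBinom_natCast (hjk.trans hkm),
      qBinom_natCast (Nat.sub_le_sub_right hkm j), Nat.sub_sub_sub_cancel_right hjk]
    have := qPoch_self_ne_zero hq k
    have := qPoch_self_ne_zero hq (m - j)
    field_simp
  · rcases (by omega : j < 0 ∨ k < j ∨ m < k) with h | h | h
    · rw [qBinom_eq_zero (m := k) (by omega), qBinom_eq_zero (m := m) (k := j) (by omega)]
      simp only [mul_zero, zero_mul]
    · rw [qBinom_eq_zero (m := k) (by omega), qBinom_eq_zero (m := m - j) (by omega)]
      simp only [mul_zero]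
    · rw [qBinom_eq_zero (m := m) (k := k) (by omega), qBinom_eq_zero (m := m - j) (by omega)]
      simp only [mul_zero, zero_mul]

lemma qBinom_zero_right (hq : ¬IsOfFinOrder q) {m : ℤ} (hm : 0 ≤ m) : qBinom q m 0 = 1 := by
  rw [qBinom, if_pos ⟨le_rfl, hm⟩, sub_zero, Int.toNat_zero, qPoch_zero, one_mul,
    div_self (qPoch_self_ne_zero hq _)]

lemma qBinom_self (hq : ¬IsOfFinOrder q) {m : ℤ} (hm : 0 ≤ m) : qBinom q m m = 1 := by
  rw [← qBinom_symm, sub_self, qBinom_zero_right hq hm]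

lemma qBinom_succ (hq : ¬IsOfFinOrder q) {m : ℤ} (hm : 0 ≤ m) (k : ℤ) :
    qBinom q (m + 1) k = qBinom q m (k - 1) + q ^ k * qBinom q m k := by
  rcases lt_or_ge k 0 with hk | hk
  · rw [qBinom_eq_zero (by omega), qBinom_eq_zero (by omega), qBinom_eq_zero (m := m) (by omega)]
    simp only [mul_zero, add_zero]
  rcases lt_trichotomy k (m + 1) with hkm | rfl | hkm
  · rcases hk.eq_or_lt with rfl | hk
    · rw [qBinom_zero_right hq (by omega), qBinom_zero_right hq hm, qBinom_eq_zero (by omega),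
        zpow_zero, zero_add, one_mul]
    obtain ⟨j, r, rfl, rfl⟩ : ∃ j r : ℕ, k = j + 1 ∧ m = j + 1 + r :=
      ⟨k.toNat - 1, m.toNat - k.toNat, by omega, by omega⟩
    rw [add_sub_cancel_right, show (j : ℤ) + 1 + r + 1 = (j + 1 + r + 1 : ℕ) by push_cast; ring,
      show (j : ℤ) + 1 + r = (j + 1 + r : ℕ) by push_cast; ring,
      show (j : ℤ) + 1 = (j + 1 : ℕ) by push_cast; ring,
      qBinom_natCast (by omega), qBinom_natCast (by omega), qBinom_natCast (by omega),
      show j + 1 + r + 1 - (j + 1) = r + 1 by omega, show j + 1 + r - j = r + 1 by omega,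
      show j + 1 + r - (j + 1) = r by omega, qPoch_self_succ (j + 1 + r), qPoch_self_succ j,
      qPoch_self_succ r, zpow_natCast]
    have := qPoch_self_ne_zero hq j
    have := qPoch_self_ne_zero hq r
    have := one_sub_pow_succ_ne_zero hq j
    have := one_sub_pow_succ_ne_zero hq r
    field_simp
    ring
  · rw [qBinom_self hq (by omega), add_sub_cancel_right, qBinom_self hq hm,
      qBinom_eq_zero (k := m + 1) (by omega), mul_zero, add_zero]
  · rw [qBinom_eq_zero (by omega), qBinom_eq_zero (by omega), qBinom_eq_zero (m := m) (by omega)]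
    simp only [mul_zero, add_zero]

/-- The shift `s` and the free window `[lo, hi]` make the induction on `m` reindexing-free:
Pascal's rule splits each term into the summands of the cases `(m, s + 1)` and `(m, s)`. -/
theorem qBinom_add_eq_sum (hq₀ : q ≠ 0) (hq : ¬IsOfFinOrder q) {m n : ℤ} (hm : 0 ≤ m)
    (hn : 0 ≤ n) {s lo hi : ℤ} (hlo : lo ≤ s) (hhi : s + m ≤ hi) (N : ℤ) :
    qBinom q (m + n) (N - s) =
      ∑ i ∈ Icc lo hi,
        q ^ ((s + m - i) * (N - i)) * qBinom q m (i - s) * qBinom q n (N - i) := by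
  lift m to ℕ using hm
  induction m generalizing s with
  | zero =>
    rw [Nat.cast_zero, zero_add, sum_eq_single_of_mem s (mem_Icc.mpr ⟨hlo, by omega⟩)]
    · rw [add_zero, sub_self, zero_mul, zpow_zero, qBinom_zero_right hq le_rfl, one_mul, one_mul]
    · intro i _ hi
      rw [qBinom_eq_zero (m := 0) (by omega), mul_zero, zero_mul]
  | succ m ih =>
    push_cast at hhi ⊢
    rw [add_right_comm, qBinom_succ hq (by omega), sub_sub, ih (by omega) (by omega),
      ih hlo (by omega), mul_sum, ← sum_add_distrib]
    refine sum_congr rfl fun i _ => ?_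
    have hpow : q ^ ((s + (m + 1) - i) * (N - i)) * q ^ (i - s) =
        q ^ (N - s) * q ^ ((s + m - i) * (N - i)) := by
      rw [← zpow_add₀ hq₀, ← zpow_add₀ hq₀]; ring_nf
    rw [qBinom_succ hq (by omega), sub_sub, show s + 1 + (m : ℤ) = s + (m + 1) by ring]
    linear_combination -(qBinom q m (i - s) * qBinom q n (N - i)) * hpow

lemma sum_qBinom_mul_qBinom_mul_qBinom (hq₀ : q ≠ 0) (hq : ¬IsOfFinOrder q) {M n lo hi : ℤ}
    (hn : 0 ≤ n) (hlo : lo ≤ 0) (hhi : M ≤ hi) (t N : ℤ) :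
    ∑ i ∈ Icc lo hi,
        q ^ ((M - i) * (N - i)) * qBinom q M i * qBinom q i t * qBinom q n (N - i) =
      qBinom q M t * qBinom q (M - t + n) (N - t) := by
  have hterm : ∀ i, q ^ ((M - i) * (N - i)) * qBinom q M i * qBinom q i t * qBinom q n (N - i) =
      qBinom q M t *
        (q ^ ((t + (M - t) - i) * (N - i)) * qBinom q (M - t) (i - t) * qBinom q n (N - i)) := by
    intro i
    rw [add_sub_cancel, mul_assoc _ (qBinom q M i), qBinom_mul_qBinom hq]
    ring
  simp_rw [hterm, ← mul_sum]
  by_cases ht : 0 ≤ t ∧ t ≤ M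
  · rw [← qBinom_add_eq_sum hq₀ hq (by omega) hn (by omega) (by omega)]
  · rw [qBinom_eq_zero ht, zero_mul, zero_mul]

lemma RatFunc.not_isOfFinOrder_X {K : Type*} [CommRing K] [IsDomain K] :
    ¬IsOfFinOrder (RatFunc.X : RatFunc K) := by
  rw [isOfFinOrder_iff_pow_eq_one]
  rintro ⟨n, hn, h⟩
  exact (RatFunc.transcendental_X.pow hn) (h ▸ isAlgebraic_one)

lemma Int.sum_Icc_natCast {M : Type*} [AddCommMonoid M] (u v : ℕ) (f : ℤ → M) :
    ∑ k ∈ Icc (u : ℤ) v, f k = ∑ k ∈ Icc u v, f k := by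
  symm
  refine sum_nbij' (↑) Int.toNat ?_ ?_ ?_ ?_ fun _ _ => rfl <;>
    (intro x hx; simp only [mem_Icc] at *; omega)

theorem sum_qBinom_mul_qBinom_add (hq₀ : q ≠ 0) (hq : ¬IsOfFinOrder q) {a b c : ℤ}
    (ha : 0 ≤ a) (hb : 0 ≤ b) (hc : 0 ≤ c) (d : ℤ) :
    ∑ k ∈ Icc 0 b, q ^ ((b - k) * (d - k)) * qBinom q b k * qBinom q c (d - k) *
        qBinom q (a + k) (b + c) =
      qBinom q a (b + c - d) * qBinom q (a - c + d) d := calc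
  _ = ∑ k ∈ Icc 0 b, ∑ j ∈ Icc 0 a,
        q ^ ((b - k) * (d - k)) * qBinom q b k * qBinom q c (d - k) *
        (q ^ ((a - j) * (b + c - j)) * qBinom q a j * qBinom q k (b + c - j)) := by
      refine sum_congr rfl fun k hk => ?_
      rw [← mul_sum]
      congr 1
      simpa using qBinom_add_eq_sum (s := 0) hq₀ hq ha (mem_Icc.1 hk).1 le_rfl
        (zero_add a).le (b + c)
  _ = ∑ j ∈ Icc 0 a, q ^ ((a - j) * (b + c - j)) * qBinom q a j *
        ∑ k ∈ Icc 0 b, q ^ ((b - k) * (d - k)) * qBinom q b k * qBinom q k (b + c - j) *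
          qBinom q c (d - k) := by
      rw [sum_comm]
      refine sum_congr rfl fun j _ => ?_
      rw [mul_sum]
      exact sum_congr rfl fun k _ => by ring
  _ = ∑ j ∈ Icc 0 a, q ^ ((a - j) * (b + c - j)) * qBinom q a j * qBinom q j (b + c - d) *
        qBinom q b (b + c - j) := by
      refine sum_congr rfl fun j _ => ?_
      rw [sum_qBinom_mul_qBinom_mul_qBinom hq₀ hq hc le_rfl le_rfl,
        show b - (b + c - j) + c = j by ring, show d - (b + c - j) = j - (b + c - d) by ring,
        qBinom_symm]
      ring
  _ = _ := by
      rw [sum_qBinom_mul_qBinom_mul_qBinom hq₀ hq hb le_rfl le_rfl,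
        show a - (b + c - d) + b = a - c + d by ring, show b + c - (b + c - d) = d by ring]

theorem q_bizley_two_general (a b c d : ℕ) :
    ∑ k ∈ Finset.Icc (d - c) (min b d),
      (RatFunc.X : RatFunc ℚ) ^ (((b : ℤ) - k) * ((d : ℤ) - k)) *
        qBinom RatFunc.X (b : ℤ) (k : ℤ) *
        qBinom RatFunc.X (c : ℤ) ((d : ℤ) - k) *
        qBinom RatFunc.X ((a : ℤ) + k) ((b : ℤ) + c)
    = qBinom RatFunc.X (a : ℤ) ((b : ℤ) + c - d) *
        qBinom RatFunc.X ((a : ℤ) - c + d) (d : ℤ) := by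
  rw [← sum_qBinom_mul_qBinom_add RatFunc.X_ne_zero RatFunc.not_isOfFinOrder_X a.cast_nonneg
    b.cast_nonneg c.cast_nonneg, ← sum_subset (s₁ := Icc ((d - c : ℕ) : ℤ) (min b d : ℕ))
    (Icc_subset_Icc (by omega) (by omega)), Int.sum_Icc_natCast]
  intro k hk hk'
  simp only [mem_Icc] at hk hk'
  rw [qBinom_eq_zero (m := c) (by omega), mul_zero, zero_mul]

theorem q_bizley_two (a b c d : ℕ) (hd : d ≤ b + c) :
    ∑ k ∈ Finset.Icc (d - c) (min b d),
      (RatFunc.X : RatFunc ℚ) ^ (((b : ℤ) - k) * ((d : ℤ) - k)) *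
        qBinom RatFunc.X (b : ℤ) (k : ℤ) *
        qBinom RatFunc.X (c : ℤ) ((d : ℤ) - k) *
        qBinom RatFunc.X ((a : ℤ) + k) ((b : ℤ) + c)
    = qBinom RatFunc.X (a : ℤ) ((b : ℤ) + c - d) *
        qBinom RatFunc.X ((a : ℤ) - c + d) (d : ℤ) :=
  q_bizley_two_general a b c d
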